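/- Let β ∈ (0,1), α > −1, ρ > 0, T > 0, and 0 < t₁ < t₂ < T. Let φ_ρ ∈ C^∞(ℝ²) satisfy 0 ≤ φ_ρ ≤ 1, φ_ρ ≡ 1 on B_{ρ/2}(0), and φ_ρ ≡ 0 outside B_ρ(0). Let Θ : ℝ² → ℝ be β-Hölder continuous and suppose that for some r ∈ [1,∞) and γ ∈ ℝ one has ∫_{|y| ≤ L} |Θ(y)|^r dy ≲ L^γ for all sufficiently large L. For y ∈ ℝ² \ {0} define A_y = { t ∈ [t₁, t₂] : (ρ/8)/|y| ≤ (T−t)^{1/(1+α)} ≤ (ρ/4)/|y| } and Ũ^{(1)}(y) = ∫_{t₁}^{t₂} ( ∫_{ℝ²} |(y−z)^⊥ / |y−z|^{2+β}| · |Θ(z)| · φ_ρ(z (T−t)^{1/(1+α)}) dz ) 𝟙_{A_y}(t) dt, where (a,b)^⊥ = (−b,a) and 𝟙_{A_y} is the indicator function of A_y. Then ∫_{L ≤ |y| ≤ 2L} |Ũ^{(1)}(y)|^r dy ≲ L^{γ − r(α+β)} for all sufficiently large L, with implicit constant independent of t₁, t₂ and L. -/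

import Mathlib

open MeasureTheory Filter Metric Set
open scoped Topology

noncomputable section

/-- The plane `ℝ²`. -/
abbrev R2 : Type := EuclideanSpace ℝ (Fin 2)

/-- The rotation by 90 degrees: `(a, b)^⊥ = (-b, a)`. -/
def perp (v : R2) : R2 := (EuclideanSpace.equiv (Fin 2) ℝ).symm ![-(v 1), v 0]

/-- `Θ` is `β`-Hölder continuous on `ℝ²`. -/
def HolderBeta (β : ℝ) (Θ : R2 → ℝ) : Prop :=
  ∃ C : ℝ, 0 ≤ C ∧ ∀ x y : R2, |Θ x - Θ y| ≤ C * ‖x - y‖ ^ β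

/-- The set `A_y = { t ∈ [t₁,t₂] : ρ/(8|y|) ≤ (T-t)^{1/(1+α)} ≤ ρ/(4|y|) }`. -/
def timeSet (α ρ T t₁ t₂ : ℝ) (y : R2) : Set ℝ :=
  {t : ℝ | t ∈ Icc t₁ t₂ ∧ ρ / 8 / ‖y‖ ≤ (T - t) ^ (1 / (1 + α)) ∧
    (T - t) ^ (1 / (1 + α)) ≤ ρ / 4 / ‖y‖}

/-- The function
`Ũ⁽¹⁾(y) = ∫_{t₁}^{t₂} ( ∫_{ℝ²} |(y-z)^⊥/|y-z|^{2+β}| |Θ(z)| φ_ρ(z (T-t)^{1/(1+α)}) dz ) 𝟙_{A_y}(t) dt`. -/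
def Utilde (β α ρ T t₁ t₂ : ℝ) (φρ Θ : R2 → ℝ) (y : R2) : ℝ :=
  ∫ t in t₁..t₂,
    (timeSet α ρ T t₁ t₂ y).indicator
      (fun t => ∫ z : R2,
        (‖perp (y - z)‖ / ‖y - z‖ ^ (2 + β)) * |Θ z| * φρ (((T - t) ^ (1 / (1 + α))) • z)) t

open scoped ENNReal

/-!
For `L ≤ |y| ≤ 2L` the time set `A_y` has length at most `(ρ/(4L))^{1+α}`, and for `t ∈ A_y`
the cutoff `φ_ρ(z (T-t)^{1/(1+α)})` vanishes unless `|z| ≤ 16L`. Hence `Ũ⁽¹⁾(y)` is bounded by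
`(ρ/(4L))^{1+α}` times the convolution of the truncated kernel `|w|^{-(1+β)} 𝟙_{|w| ≤ 18L}` with
`|Θ| 𝟙_{|z| ≤ 16L}`. By homogeneity the kernel has `L¹` norm `≍ L^{1-β}`, so Young's inequality
`L¹ * Lʳ → Lʳ` and the growth of `Θ` give `L^{-r(1+α)} L^{r(1-β)} L^γ = L^{γ - r(α+β)}`.
-/

theorem HolderBeta.continuous {β : ℝ} {Θ : R2 → ℝ} (h : HolderBeta β Θ) (hβ : 0 < β) :
    Continuous Θ := by
  obtain ⟨C, -, hC⟩ := h
  refine continuous_iff_continuousAt.2 fun x => ?_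
  rw [ContinuousAt, tendsto_iff_norm_sub_tendsto_zero]
  refine squeeze_zero (fun _ => norm_nonneg _) (fun y => hC y x) ?_
  have : Tendsto (fun y => C * ‖y - x‖ ^ β) (𝓝 x) (𝓝 (C * ‖x - x‖ ^ β)) :=
    ((continuous_norm.comp (continuous_id.sub continuous_const)).rpow_const
      fun _ => Or.inr hβ.le).tendsto x |>.const_mul C
  simpa [Real.zero_rpow hβ.ne'] using this

theorem norm_perp (v : R2) : ‖perp v‖ = ‖v‖ := by
  simp [EuclideanSpace.norm_eq, perp, Fin.sum_univ_two, add_comm]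

theorem norm_perp_div_rpow_le (β : ℝ) (w : R2) :
    ‖perp w‖ / ‖w‖ ^ (2 + β) ≤ ‖w‖ ^ (-(1 + β)) := by
  rw [norm_perp]
  rcases (norm_nonneg w).eq_or_lt with h | h
  · rw [← h, zero_div]
    exact Real.rpow_nonneg le_rfl _
  · refine le_of_eq ?_
    calc ‖w‖ / ‖w‖ ^ (2 + β) = ‖w‖ ^ (1 - (2 + β)) := by rw [Real.rpow_sub h, Real.rpow_one]
      _ = ‖w‖ ^ (-(1 + β)) := by ring_nf

section Homogeneity

variable {E : Type*} [NormedAddCommGroup E] [NormedSpace ℝ E] [FiniteDimensional ℝ E]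
  [MeasurableSpace E] [BorelSpace E] (μ : Measure E) [μ.IsAddHaarMeasure]

open Module

theorem lintegral_closedBall_norm_rpow (c : ℝ) {R : ℝ} (hR : 0 < R) :
    ∫⁻ x in closedBall 0 R, ENNReal.ofReal (‖x‖ ^ c) ∂μ =
      ENNReal.ofReal (R ^ (finrank ℝ E + c)) *
        ∫⁻ x in closedBall 0 1, ENNReal.ofReal (‖x‖ ^ c) ∂μ := by
  set f : ℝ → E → ℝ≥0∞ := fun ρ => (closedBall 0 ρ).indicator fun x => ENNReal.ofReal (‖x‖ ^ c)
  have hf : Measurable (f R) :=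
    (measurable_norm.pow_const c).ennreal_ofReal.indicator measurableSet_closedBall
  have hscale : ∀ x, f R (R • x) = ENNReal.ofReal (R ^ c) * f 1 x := by
    intro x
    have hmem : R • x ∈ closedBall (0 : E) R ↔ x ∈ closedBall (0 : E) 1 := by
      simp [norm_smul, abs_of_pos hR, hR]
    by_cases hx : x ∈ closedBall (0 : E) 1
    · simp only [f, indicator_of_mem hx, indicator_of_mem (hmem.2 hx), norm_smul,
        Real.norm_eq_abs, abs_of_pos hR, Real.mul_rpow hR.le (norm_nonneg _),
        ENNReal.ofReal_mul (Real.rpow_nonneg hR.le _)]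
    · simp [f, indicator_of_notMem hx, indicator_of_notMem (mt hmem.1 hx)]
  have key := lintegral_map hf (measurable_const_smul R) (μ := μ)
  rw [Measure.map_addHaar_smul μ hR.ne', lintegral_smul_measure] at key
  simp only [hscale, lintegral_const_mul' _ _ ENNReal.ofReal_ne_top] at key
  rw [abs_of_pos (by positivity), smul_eq_mul] at key
  rw [← lintegral_indicator measurableSet_closedBall,
    ← lintegral_indicator measurableSet_closedBall]
  change ∫⁻ x, f R x ∂μ = _ * ∫⁻ x, f 1 x ∂μ
  have hRd : (0 : ℝ) < R ^ finrank ℝ E := by positivity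
  calc ∫⁻ x, f R x ∂μ
      = ENNReal.ofReal (R ^ finrank ℝ E) *
          (ENNReal.ofReal (R ^ finrank ℝ E)⁻¹ * ∫⁻ x, f R x ∂μ) := by
        rw [← mul_assoc, ← ENNReal.ofReal_mul hRd.le, mul_inv_cancel₀ hRd.ne', ENNReal.ofReal_one,
          one_mul]
    _ = ENNReal.ofReal (R ^ (finrank ℝ E + c)) * ∫⁻ x, f 1 x ∂μ := by
        rw [key, ← mul_assoc, ← ENNReal.ofReal_mul hRd.le, Real.rpow_add hR, Real.rpow_natCast]

theorem lintegral_closedBall_norm_rpow_lt_top [Nontrivial E] {c : ℝ}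
    (hc : -(finrank ℝ E : ℝ) < c) :
    ∫⁻ x in closedBall 0 1, ENNReal.ofReal (‖x‖ ^ c) ∂μ < ∞ := by
  have hloc : LocallyIntegrable (fun x : E => ‖x‖ ^ c) μ :=
    locallyIntegrable_of_norm_le_rpow (C := 1) (α := -c) finrank_pos (by linarith)
      (ae_of_all _ fun x => by simp [abs_of_nonneg (Real.rpow_nonneg (norm_nonneg x) c)])
      (measurable_norm.pow_const c).aestronglyMeasurable
  exact (hloc.integrableOn_isCompact (isCompact_closedBall 0 1)).lintegral_lt_top

end Homogeneity

section Young

theorem lintegral_mul_rpow_le {α : Type*} [MeasurableSpace α] {μ : Measure α} {k F : α → ℝ≥0∞}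
    (hk : AEMeasurable k μ) (hF : AEMeasurable F μ) {r : ℝ} (hr : 1 ≤ r) :
    (∫⁻ a, k a * F a ∂μ) ^ r ≤ (∫⁻ a, k a ∂μ) ^ (r - 1) * ∫⁻ a, k a * F a ^ r ∂μ := by
  have hr0 : 0 < r := by linarith
  have hsplit : ∀ a, k a ^ (1 - r⁻¹) * (k a * F a ^ r) ^ r⁻¹ = k a * F a := by
    intro a
    rw [ENNReal.mul_rpow_of_nonneg _ _ (by positivity), ← ENNReal.rpow_mul,
      mul_inv_cancel₀ hr0.ne', ENNReal.rpow_one, ← mul_assoc,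
      ← ENNReal.rpow_add_of_nonneg _ _ (sub_nonneg.2 (inv_le_one_of_one_le₀ hr)) (by positivity),
      sub_add_cancel, ENNReal.rpow_one]
  have holder := ENNReal.lintegral_mul_norm_pow_le hk (hk.mul (hF.pow_const r))
    (sub_nonneg.2 (inv_le_one_of_one_le₀ hr)) (inv_nonneg.2 hr0.le) (sub_add_cancel 1 r⁻¹)
  simp only [Pi.mul_apply, hsplit] at holder
  calc (∫⁻ a, k a * F a ∂μ) ^ r
      ≤ ((∫⁻ a, k a ∂μ) ^ (1 - r⁻¹) * (∫⁻ a, k a * F a ^ r ∂μ) ^ r⁻¹) ^ r :=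
        ENNReal.rpow_le_rpow holder hr0.le
    _ = (∫⁻ a, k a ∂μ) ^ (r - 1) * ∫⁻ a, k a * F a ^ r ∂μ := by
        rw [ENNReal.mul_rpow_of_nonneg _ _ hr0.le, ← ENNReal.rpow_mul, ← ENNReal.rpow_mul,
          inv_mul_cancel₀ hr0.ne', ENNReal.rpow_one, sub_mul, one_mul, inv_mul_cancel₀ hr0.ne']

variable {G : Type*} [AddCommGroup G] [MeasurableSpace G] [MeasurableAdd₂ G] [MeasurableNeg G]
  {μ : Measure G} [SFinite μ] [μ.IsAddLeftInvariant] [μ.IsNegInvariant]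

theorem lintegral_rpow_lintegral_sub_mul_le {k F : G → ℝ≥0∞} (hk : Measurable k)
    (hF : Measurable F) {r : ℝ} (hr : 1 ≤ r) :
    ∫⁻ y, (∫⁻ z, k (y - z) * F z ∂μ) ^ r ∂μ ≤ (∫⁻ w, k w ∂μ) ^ r * ∫⁻ z, F z ^ r ∂μ := by
  have hk_sub : ∀ y, Measurable fun z => k (y - z) := fun y =>
    hk.comp (measurable_const.sub measurable_id)
  have hmass : ∀ y, ∫⁻ z, k (y - z) ∂μ = ∫⁻ w, k w ∂μ := fun y =>
    (Measure.measurePreserving_sub_left μ y).lintegral_comp hk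
  calc ∫⁻ y, (∫⁻ z, k (y - z) * F z ∂μ) ^ r ∂μ
      ≤ ∫⁻ y, (∫⁻ w, k w ∂μ) ^ (r - 1) * ∫⁻ z, k (y - z) * F z ^ r ∂μ ∂μ := by
        refine lintegral_mono fun y => ?_
        rw [← hmass y]
        exact lintegral_mul_rpow_le (hk_sub y).aemeasurable hF.aemeasurable hr
    _ = (∫⁻ w, k w ∂μ) ^ (r - 1) * ∫⁻ z, (∫⁻ y, k (y - z) ∂μ) * F z ^ r ∂μ := by
        have hjoint : Measurable (Function.uncurry fun y z => k (y - z) * F z ^ r) :=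
          (hk.comp (measurable_fst.sub measurable_snd)).mul ((hF.pow_const r).comp measurable_snd)
        have hmeas : Measurable fun y => ∫⁻ z, k (y - z) * F z ^ r ∂μ :=
          hjoint.lintegral_prod_right'
        rw [lintegral_const_mul _ hmeas, lintegral_lintegral_swap hjoint.aemeasurable]
        congr 1
        exact lintegral_congr fun z =>
          lintegral_mul_const _ (hk.comp (measurable_id.sub measurable_const))
    _ = (∫⁻ w, k w ∂μ) ^ r * ∫⁻ z, F z ^ r ∂μ := by
        simp_rw [fun z => (measurePreserving_sub_right μ z).lintegral_comp hk]
        have hpow : ∀ x : ℝ≥0∞, x ^ (r - 1) * x = x ^ r := fun x => by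
          simpa using (ENNReal.rpow_add_of_nonneg (x := x) (r - 1) 1 (by linarith) zero_le_one).symm
        rw [lintegral_const_mul _ (hF.pow_const r), ← mul_assoc, hpow]

end Young

theorem integral_le_of_lintegral_enorm_le {α : Type*} [MeasurableSpace α] {μ : Measure α}
    {f : α → ℝ} {c : ℝ} (hc : 0 ≤ c) (h : ∫⁻ a, ‖f a‖ₑ ∂μ ≤ ENNReal.ofReal c) :
    ∫ a, f a ∂μ ≤ c := by
  have habs : ENNReal.ofReal |∫ a, f a ∂μ| ≤ ENNReal.ofReal c := by
    rw [← Real.enorm_eq_ofReal_abs]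
    exact (enorm_integral_le_lintegral_enorm f).trans h
  exact (le_abs_self _).trans ((ENNReal.ofReal_le_ofReal_iff hc).1 habs)

def truncKernel (β R : ℝ) : R2 → ℝ≥0∞ :=
  (closedBall 0 R).indicator fun w => ENNReal.ofReal (‖w‖ ^ (-(1 + β)))

def truncAbs (Θ : R2 → ℝ) (R : ℝ) : R2 → ℝ≥0∞ :=
  (closedBall 0 R).indicator fun z => ENNReal.ofReal |Θ z|

theorem measurable_truncKernel (β R : ℝ) : Measurable (truncKernel β R) :=
  (measurable_norm.pow_const _).ennreal_ofReal.indicator measurableSet_closedBall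

theorem Measurable.truncAbs {Θ : R2 → ℝ} (hΘ : Measurable Θ) (R : ℝ) :
    Measurable (truncAbs Θ R) :=
  hΘ.abs.ennreal_ofReal.indicator measurableSet_closedBall

def unitKernelMass (β : ℝ) : ℝ :=
  (∫⁻ w in closedBall (0 : R2) 1, ENNReal.ofReal (‖w‖ ^ (-(1 + β)))).toReal

theorem unitKernelMass_nonneg (β : ℝ) : 0 ≤ unitKernelMass β := ENNReal.toReal_nonneg

theorem lintegral_truncKernel {β R : ℝ} (hβ : β < 1) (hR : 0 < R) :
    ∫⁻ w, truncKernel β R w = ENNReal.ofReal (R ^ (1 - β) * unitKernelMass β) := by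
  have hfin := lintegral_closedBall_norm_rpow_lt_top (volume : Measure R2) (c := -(1 + β))
    (by simp; linarith)
  rw [truncKernel, lintegral_indicator measurableSet_closedBall,
    lintegral_closedBall_norm_rpow volume _ hR, ENNReal.ofReal_mul (by positivity), unitKernelMass,
    ENNReal.ofReal_toReal hfin.ne, finrank_euclideanSpace_fin]
  congr 3
  push_cast
  ring

theorem lintegral_truncAbs_rpow {Θ : R2 → ℝ} (hΘ : Continuous Θ) {r : ℝ} (hr : 0 < r) (R : ℝ) :
    ∫⁻ z, truncAbs Θ R z ^ r = ENNReal.ofReal (∫ z in closedBall 0 R, |Θ z| ^ r) := by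
  have hpow : ∀ z, truncAbs Θ R z ^ r =
      (closedBall 0 R).indicator (fun z => ENNReal.ofReal (|Θ z| ^ r)) z := by
    intro z
    by_cases hz : z ∈ closedBall (0 : R2) R
    · simp [truncAbs, indicator_of_mem hz, ENNReal.ofReal_rpow_of_nonneg (abs_nonneg _) hr.le]
    · simp [truncAbs, indicator_of_notMem hz, hr]
  have hint : IntegrableOn (fun z => |Θ z| ^ r) (closedBall 0 R) :=
    (hΘ.abs.rpow_const fun _ => Or.inr hr.le).continuousOn.integrableOn_compact
      (isCompact_closedBall 0 R)
  simp_rw [hpow, lintegral_indicator measurableSet_closedBall]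
  exact (ofReal_integral_eq_lintegral_ofReal hint
    (ae_of_all _ fun z => Real.rpow_nonneg (abs_nonneg _) r)).symm

theorem timeSet_subset_Icc {α ρ T t₁ t₂ : ℝ} (hα : -1 < α) (hρ : 0 ≤ ρ) (hT : t₂ < T) (y : R2) :
    timeSet α ρ T t₁ t₂ y ⊆ Icc (T - (ρ / 4 / ‖y‖) ^ (1 + α)) (T - (ρ / 8 / ‖y‖) ^ (1 + α)) := by
  rintro t ⟨ht, hlo, hhi⟩
  have hα' : 0 < 1 + α := by linarith
  have hTt : 0 < T - t := by linarith [ht.2]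
  have hinv : ((T - t) ^ (1 / (1 + α))) ^ (1 + α) = T - t := by
    rw [← Real.rpow_mul hTt.le, one_div_mul_cancel hα'.ne', Real.rpow_one]
  have hlo' := Real.rpow_le_rpow (by positivity) hlo hα'.le
  have hhi' := Real.rpow_le_rpow (by positivity) hhi hα'.le
  rw [hinv] at hlo' hhi'
  constructor <;> linarith

theorem smul_notMem_ball {ρ s : ℝ} {y z : R2} (hρ : 0 ≤ ρ) (hy : y ≠ 0) (hs : ρ / 8 / ‖y‖ ≤ s)
    (hz : 8 * ‖y‖ ≤ ‖z‖) : s • z ∉ ball 0 ρ := by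
  have hy' : 0 < ‖y‖ := norm_pos_iff.2 hy
  rw [mem_ball_zero_iff, not_lt, norm_smul, Real.norm_eq_abs]
  calc ρ = ρ / 8 / ‖y‖ * (8 * ‖y‖) := by field_simp
    _ ≤ s * ‖z‖ := mul_le_mul hs hz (by positivity) ((by positivity : 0 ≤ ρ / 8 / ‖y‖).trans hs)
    _ ≤ |s| * ‖z‖ := by gcongr; exact le_abs_self s

section Utilde

variable {β α ρ T t₁ t₂ L r : ℝ} {φρ Θ : R2 → ℝ} {y : R2}

theorem enorm_integral_le_of_mem_timeSet (hρ : 0 ≤ ρ) (hφ01 : ∀ x, φρ x ∈ Icc (0 : ℝ) 1)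
    (hφzero : ∀ x ∉ ball (0 : R2) ρ, φρ x = 0) (hy : y ≠ 0) (hy2L : ‖y‖ ≤ 2 * L) {t : ℝ}
    (ht : t ∈ timeSet α ρ T t₁ t₂ y) :
    ‖∫ z : R2, (‖perp (y - z)‖ / ‖y - z‖ ^ (2 + β)) * |Θ z| *
        φρ (((T - t) ^ (1 / (1 + α))) • z)‖ₑ ≤
      ∫⁻ z, truncKernel β (18 * L) (y - z) * truncAbs Θ (16 * L) z := by
  refine (enorm_integral_le_lintegral_enorm _).trans (lintegral_mono fun z => ?_)
  have hker := norm_perp_div_rpow_le β (y - z)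
  by_cases hz : ‖z‖ ≤ 16 * L
  · have hyz : ‖y - z‖ ≤ 18 * L := (norm_sub_le y z).trans (by linarith)
    rw [truncKernel, truncAbs, indicator_of_mem (mem_closedBall_zero_iff.2 hyz),
      indicator_of_mem (mem_closedBall_zero_iff.2 hz), ← ENNReal.ofReal_mul (by positivity),
      Real.enorm_eq_ofReal (mul_nonneg (by positivity) (hφ01 _).1)]
    apply ENNReal.ofReal_le_ofReal
    calc _ ≤ ‖perp (y - z)‖ / ‖y - z‖ ^ (2 + β) * |Θ z| * 1 := by gcongr; exact (hφ01 _).2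
      _ ≤ ‖y - z‖ ^ (-(1 + β)) * |Θ z| := by rw [mul_one]; gcongr
  · rw [hφzero _ (smul_notMem_ball hρ hy ht.2.1 (by linarith)), mul_zero, enorm_zero]
    exact bot_le

-- Bounding `‖·‖ₑ` by lower integrals needs no integrability of the inner integrals.
theorem enorm_Utilde_le (hα : -1 < α) (hρ : 0 ≤ ρ) (hφ01 : ∀ x, φρ x ∈ Icc (0 : ℝ) 1)
    (hφzero : ∀ x ∉ ball (0 : R2) ρ, φρ x = 0) (h12 : t₁ ≤ t₂) (hT : t₂ < T) (hL : 0 < L)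
    (hyL : L ≤ ‖y‖) (hy2L : ‖y‖ ≤ 2 * L) :
    ‖Utilde β α ρ T t₁ t₂ φρ Θ y‖ₑ ≤ ENNReal.ofReal ((ρ / (4 * L)) ^ (1 + α)) *
      ∫⁻ z, truncKernel β (18 * L) (y - z) * truncAbs Θ (16 * L) z := by
  set G := ∫⁻ z, truncKernel β (18 * L) (y - z) * truncAbs Θ (16 * L) z
  set I := Icc (T - (ρ / 4 / ‖y‖) ^ (1 + α)) (T - (ρ / 8 / ‖y‖) ^ (1 + α))
  have hy : y ≠ 0 := norm_pos_iff.1 (hL.trans_le hyL)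
  have hpt : ∀ t, ‖(timeSet α ρ T t₁ t₂ y).indicator (fun t => ∫ z : R2,
      (‖perp (y - z)‖ / ‖y - z‖ ^ (2 + β)) * |Θ z| * φρ (((T - t) ^ (1 / (1 + α))) • z)) t‖ₑ ≤
      I.indicator (fun _ => G) t := by
    intro t
    by_cases ht : t ∈ timeSet α ρ T t₁ t₂ y
    · rw [indicator_of_mem ht, indicator_of_mem (timeSet_subset_Icc hα hρ hT y ht)]
      exact enorm_integral_le_of_mem_timeSet hρ hφ01 hφzero hy hy2L ht
    · simp [indicator_of_notMem ht]
  have hvol : volume I ≤ ENNReal.ofReal ((ρ / (4 * L)) ^ (1 + α)) := by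
    have hlo := Real.rpow_nonneg (by positivity : 0 ≤ ρ / 8 / ‖y‖) (1 + α)
    have hhi : (ρ / 4 / ‖y‖) ^ (1 + α) ≤ (ρ / (4 * L)) ^ (1 + α) := by
      rw [div_div]; gcongr; linarith
    rw [Real.volume_Icc]
    exact ENNReal.ofReal_le_ofReal (by linarith)
  calc ‖Utilde β α ρ T t₁ t₂ φρ Θ y‖ₑ
      ≤ ∫⁻ t in Ioc t₁ t₂, ‖(timeSet α ρ T t₁ t₂ y).indicator (fun t => ∫ z : R2,
          (‖perp (y - z)‖ / ‖y - z‖ ^ (2 + β)) * |Θ z| *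
            φρ (((T - t) ^ (1 / (1 + α))) • z)) t‖ₑ := by
        rw [Utilde, intervalIntegral.integral_of_le h12]
        exact enorm_integral_le_lintegral_enorm _
    _ ≤ ∫⁻ t, I.indicator (fun _ => G) t :=
        (setLIntegral_le_lintegral _ _).trans (lintegral_mono hpt)
    _ = G * volume I := lintegral_indicator_const measurableSet_Icc G
    _ ≤ ENNReal.ofReal ((ρ / (4 * L)) ^ (1 + α)) * G := by rw [mul_comm]; gcongr

theorem lintegral_annulus_enorm_Utilde_rpow_le (hα : -1 < α) (hρ : 0 ≤ ρ)
    (hφ01 : ∀ x, φρ x ∈ Icc (0 : ℝ) 1) (hφzero : ∀ x ∉ ball (0 : R2) ρ, φρ x = 0)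
    (hΘ : Measurable Θ) (hr : 1 ≤ r) (h12 : t₁ ≤ t₂) (hT : t₂ < T) (hL : 0 < L) :
    ∫⁻ y in {y : R2 | L ≤ ‖y‖ ∧ ‖y‖ ≤ 2 * L}, ‖Utilde β α ρ T t₁ t₂ φρ Θ y‖ₑ ^ r ≤
      ENNReal.ofReal ((ρ / (4 * L)) ^ (1 + α)) ^ r *
        ((∫⁻ w, truncKernel β (18 * L) w) ^ r * ∫⁻ z, truncAbs Θ (16 * L) z ^ r) := by
  have hr0 : 0 ≤ r := by linarith
  set c := ENNReal.ofReal ((ρ / (4 * L)) ^ (1 + α))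
  calc ∫⁻ y in {y : R2 | L ≤ ‖y‖ ∧ ‖y‖ ≤ 2 * L}, ‖Utilde β α ρ T t₁ t₂ φρ Θ y‖ₑ ^ r
      ≤ ∫⁻ y in {y : R2 | L ≤ ‖y‖ ∧ ‖y‖ ≤ 2 * L},
          (c * ∫⁻ z, truncKernel β (18 * L) (y - z) * truncAbs Θ (16 * L) z) ^ r :=
        setLIntegral_mono' ((measurableSet_le measurable_const measurable_norm).inter
          (measurableSet_le measurable_norm measurable_const)) fun y hy =>
          ENNReal.rpow_le_rpow (enorm_Utilde_le hα hρ hφ01 hφzero h12 hT hL hy.1 hy.2) hr0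
    _ ≤ ∫⁻ y, (c * ∫⁻ z, truncKernel β (18 * L) (y - z) * truncAbs Θ (16 * L) z) ^ r :=
        setLIntegral_le_lintegral _ _
    _ = c ^ r * ∫⁻ y, (∫⁻ z, truncKernel β (18 * L) (y - z) * truncAbs Θ (16 * L) z) ^ r := by
        simp_rw [ENNReal.mul_rpow_of_nonneg _ _ hr0]
        exact lintegral_const_mul' _ _ (ENNReal.rpow_ne_top_of_nonneg hr0 ENNReal.ofReal_ne_top)
    _ ≤ c ^ r * ((∫⁻ w, truncKernel β (18 * L) w) ^ r * ∫⁻ z, truncAbs Θ (16 * L) z ^ r) := by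
        gcongr
        exact lintegral_rpow_lintegral_sub_mul_le (measurable_truncKernel β _) (hΘ.truncAbs _) hr

theorem integral_annulus_Utilde_rpow_le (hβ : β < 1) (hα : -1 < α) (hρ : 0 ≤ ρ)
    (hφ01 : ∀ x, φρ x ∈ Icc (0 : ℝ) 1) (hφzero : ∀ x ∉ ball (0 : R2) ρ, φρ x = 0)
    (hΘ : Continuous Θ) (hr : 1 ≤ r) (h12 : t₁ ≤ t₂) (hT : t₂ < T) (hL : 0 < L) :
    ∫ y in {y : R2 | L ≤ ‖y‖ ∧ ‖y‖ ≤ 2 * L}, |Utilde β α ρ T t₁ t₂ φρ Θ y| ^ r ≤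
      ((ρ / (4 * L)) ^ (1 + α)) ^ r * ((18 * L) ^ (1 - β) * unitKernelMass β) ^ r *
        ∫ z in closedBall 0 (16 * L), |Θ z| ^ r := by
  have hr0 : 0 < r := by linarith
  have ha : 0 ≤ (ρ / (4 * L)) ^ (1 + α) := by positivity
  have hb : 0 ≤ (18 * L) ^ (1 - β) * unitKernelMass β :=
    mul_nonneg (by positivity) (unitKernelMass_nonneg β)
  refine integral_le_of_lintegral_enorm_le (by positivity) ?_
  simp_rw [Real.enorm_rpow_of_nonneg (abs_nonneg _) hr0.le, Real.enorm_abs]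
  refine (lintegral_annulus_enorm_Utilde_rpow_le hα hρ hφ01 hφzero hΘ.measurable hr h12 hT
    hL).trans_eq ?_
  rw [lintegral_truncKernel hβ (by positivity), lintegral_truncAbs_rpow hΘ hr0,
    ENNReal.ofReal_mul (mul_nonneg (Real.rpow_nonneg ha r) (Real.rpow_nonneg hb r)),
    ENNReal.ofReal_mul (Real.rpow_nonneg ha r), ENNReal.ofReal_rpow_of_nonneg ha hr0.le,
    ENNReal.ofReal_rpow_of_nonneg hb hr0.le, mul_assoc]

end Utilde

theorem annulus_factors_eq_const_mul_rpow {ρ α β r γ D C L : ℝ} (hρ : 0 ≤ ρ) (hD : 0 ≤ D)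
    (hL : 0 < L) :
    ((ρ / (4 * L)) ^ (1 + α)) ^ r * ((18 * L) ^ (1 - β) * D) ^ r * (C * (16 * L) ^ γ) =
      ((ρ / 4) ^ (1 + α)) ^ r * (18 ^ (1 - β) * D) ^ r * (C * 16 ^ γ) * L ^ (γ - r * (α + β)) := by
  have hLexp : L ^ (γ - r * (α + β)) = L ^ ((1 - β) * r) * L ^ γ / L ^ ((1 + α) * r) := by
    rw [← Real.rpow_add hL, ← Real.rpow_sub hL]; ring_nf
  rw [hLexp, ← div_div, Real.div_rpow (by positivity) hL.le,
    Real.div_rpow (by positivity) (by positivity), Real.mul_rpow (by norm_num) hL.le,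
    Real.mul_rpow (by positivity) hD, Real.mul_rpow (by positivity) hD,
    Real.mul_rpow (by positivity) (by positivity), Real.mul_rpow (by norm_num) hL.le,
    ← Real.rpow_mul hL.le, ← Real.rpow_mul hL.le]
  field_simp

theorem Utilde_dyadic_estimate_general
    (β α ρ T γ r : ℝ) (φρ Θ : R2 → ℝ)
    (hβ : β ∈ Ioo (0:ℝ) 1) (hα : -1 < α) (hρ : 0 < ρ)
    (hφ01 : ∀ x, φρ x ∈ Icc (0:ℝ) 1)
    (hφzero : ∀ x ∉ ball (0:R2) ρ, φρ x = 0)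
    (hΘHolder : HolderBeta β Θ) (hr : 1 ≤ r)
    (hΘr : ∃ C L₁ : ℝ, ∀ L ≥ L₁,
      (∫ y in closedBall (0:R2) L, |Θ y| ^ r) ≤ C * L ^ γ) :
    ∃ C L₀ : ℝ, 0 < C ∧ ∀ t₁ t₂ : ℝ, 0 < t₁ → t₁ < t₂ → t₂ < T → ∀ L ≥ L₀,
      (∫ y in {y : R2 | L ≤ ‖y‖ ∧ ‖y‖ ≤ 2 * L}, |Utilde β α ρ T t₁ t₂ φρ Θ y| ^ r)
        ≤ C * L ^ (γ - r * (α + β)) := by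
  obtain ⟨hβ0, hβ1⟩ := hβ
  obtain ⟨CΘ, L₁, hCΘ⟩ := hΘr
  set K := ((ρ / 4) ^ (1 + α)) ^ r * (18 ^ (1 - β) * unitKernelMass β) ^ r * (max CΘ 0 * 16 ^ γ)
  have hD := unitKernelMass_nonneg β
  refine ⟨K + 1, max L₁ 1, by positivity, fun t₁ t₂ _ h12 hT L hL => ?_⟩
  have hL0 : 0 < L := zero_lt_one.trans_le ((le_max_right _ _).trans hL)
  have hΘL : ∫ z in closedBall 0 (16 * L), |Θ z| ^ r ≤ max CΘ 0 * (16 * L) ^ γ :=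
    (hCΘ _ (by linarith [le_max_left L₁ 1])).trans (by gcongr; exact le_max_left _ _)
  calc _ ≤ ((ρ / (4 * L)) ^ (1 + α)) ^ r * ((18 * L) ^ (1 - β) * unitKernelMass β) ^ r *
          ∫ z in closedBall 0 (16 * L), |Θ z| ^ r :=
        integral_annulus_Utilde_rpow_le hβ1 hα hρ.le hφ01 hφzero (hΘHolder.continuous hβ0) hr
          h12.le hT hL0
    _ ≤ ((ρ / (4 * L)) ^ (1 + α)) ^ r * ((18 * L) ^ (1 - β) * unitKernelMass β) ^ r *
          (max CΘ 0 * (16 * L) ^ γ) := by gcongr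
    _ = K * L ^ (γ - r * (α + β)) := annulus_factors_eq_const_mul_rpow hρ.le hD hL0
    _ ≤ (K + 1) * L ^ (γ - r * (α + β)) := by gcongr; linarith

/-- **Lemma 4.2** (case `β ∈ (0,1)`): if `∫_{|y|≤L} |Θ|^r ≲ L^γ` for large `L`,
then `∫_{L ≤ |y| ≤ 2L} |Ũ⁽¹⁾(y)|^r ≲ L^{γ - r(α+β)}` for large `L`, with a
constant independent of `t₁`, `t₂` and `L`. -/
theorem Utilde_dyadic_estimate
    (β α ρ T γ r : ℝ) (φρ Θ : R2 → ℝ)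
    (hβ : β ∈ Ioo (0:ℝ) 1) (hα : -1 < α) (hρ : 0 < ρ) (hT : 0 < T)
    (hφsmooth : ContDiff ℝ (⊤ : ℕ∞) φρ)
    (hφ01 : ∀ x, φρ x ∈ Icc (0:ℝ) 1)
    (hφone : ∀ x ∈ ball (0:R2) (ρ / 2), φρ x = 1)
    (hφzero : ∀ x ∉ ball (0:R2) ρ, φρ x = 0)
    (hΘHolder : HolderBeta β Θ) (hr : 1 ≤ r)
    (hΘr : ∃ C L₁ : ℝ, ∀ L ≥ L₁,
      (∫ y in closedBall (0:R2) L, |Θ y| ^ r) ≤ C * L ^ γ) :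
    ∃ C L₀ : ℝ, 0 < C ∧ ∀ t₁ t₂ : ℝ, 0 < t₁ → t₁ < t₂ → t₂ < T → ∀ L ≥ L₀,
      (∫ y in {y : R2 | L ≤ ‖y‖ ∧ ‖y‖ ≤ 2 * L}, |Utilde β α ρ T t₁ t₂ φρ Θ y| ^ r)
        ≤ C * L ^ (γ - r * (α + β)) :=
  Utilde_dyadic_estimate_general β α ρ T γ r φρ Θ hβ hα hρ hφ01 hφzero hΘHolder hr hΘr
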